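/- Let I be a nonempty finite set and U : Z₆^I → Z₂ a nonzero function with spt U ⊆ B, where B is the set of standard basis vectors of Z₆^I. Then TS_Ham(0, U) = 2·|spt U| + 1. -/
import Mathlib


open scoped BigOperators
open scoped Classical
open MeasureTheory Filter
open scoped ENNReal NNReal

noncomputable section

/-- The length of the shortest word in the alphabet `Gens` leading from `x` to `y`
under the (not necessarily associative) multiplication `mul`. -/
def wordLen {α : Type*} (mul : α → α → α) (Gens : Set α) (x y : α) : ℕ :=
  sInf {ℓ : ℕ | ∃ w : List α, (∀ g ∈ w, g ∈ Gens) ∧ w.length = ℓ ∧ w.foldl mul x = y}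

/-- The word metric on a group associated with a generating set `S`. -/
def groupWordDist {G : Type*} [Group G] (S : Set G) (g h : G) : ℕ :=
  wordLen (· * ·) S g h

/-- A group has exponential growth w.r.t. a generating set `S` if there is `c > 1`
such that the ball of radius `r` about the identity contains at least `c ^ r`
points for infinitely many positive integers `r`. -/
def HasExpGrowth {G : Type*} [Group G] (S : Set G) : Prop :=
  ∃ c : ℝ, 1 < c ∧ ∀ N : ℕ, ∃ r : ℕ, N ≤ r ∧ 0 < r ∧
    ∃ T : Finset G, (∀ g ∈ T, groupWordDist S 1 g ≤ r) ∧ (c : ℝ) ^ r ≤ (T.card : ℝ)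

/-- The pinned travelling salesman metric associated with the distance function `ρ`
and basepoint `x0`, evaluated on two (finitely supported) functions `X → ZMod 2`. -/
def TS {X : Type*} (ρ : X → X → ℝ) (x0 : X) (A B : X → ZMod 2) : ℝ :=
  if A = B then 0
  else 1 + sInf {L : ℝ | ∃ (ℓ : ℕ) (x : ℕ → X), 1 ≤ ℓ ∧ x 0 = x0 ∧ x ℓ = x0 ∧
    (∀ p : X, A p + B p ≠ 0 → ∃ i < ℓ, x i = p) ∧
    L = ∑ i ∈ Finset.range ℓ, ρ (x i) (x (i + 1))}

/-- The quotient of an addition-invariant distance function `d` by the subgroup `F`,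
expressed on representatives: `quotDistBy d F x y = inf_{v ∈ F} d x (y + v)`. -/
def quotDistBy {E : Type*} [Add E] (d : E → E → ℝ) (F : Set E) (x y : E) : ℝ :=
  sInf {r : ℝ | ∃ v ∈ F, r = d x (y + v)}

/-- The distortion of a map `f` between "metric" spaces `(Y, σ)` and `(Z, θ)`, where the
suprema defining it run over pairs satisfying the apartness relation `P`
(typically: `≠`, or "lying in distinct cosets"). -/
def distortionOn {Y Z : Type*} (σ : Y → Y → ℝ) (θ : Z → Z → ℝ)
    (P : Y → Y → Prop) (f : Y → Z) : ℝ :=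
  sSup {r : ℝ | ∃ u v, P u v ∧ r = θ (f u) (f v) / σ u v} *
  sSup {r : ℝ | ∃ u v, P u v ∧ r = σ u v / θ (f u) (f v)}

/-- Multiplication of the (restricted) wreath-product-style semidirect product
`M^{⊕H} ⋊ H`, where `H` has multiplication `hmul` and acts on `H →₀ M` by
coordinate right-translation:
`(a, h₁) · (b, h₂) = ((a (· h₂⁻¹)) + b, h₁ h₂)`. -/
def wrMul {H M : Type*} [AddCommMonoid M] (hmul : H → H → H) :
    ((H →₀ M) × H) → ((H →₀ M) × H) → ((H →₀ M) × H) :=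
  fun x y => (Finsupp.mapDomain (fun h => hmul h y.2) x.1 + y.1, hmul x.2 y.2)

/-- The lifted generating set `{(±e_{e_G}, e_G)} ∪ {(0, s) : s ∈ S}` of `Z₆ ≀ G`. -/
def liftGens6 {G : Type*} [Group G] (S : Set G) : Set ((G →₀ ZMod 6) × G) :=
  {p | p = (Finsupp.single (1 : G) (1 : ZMod 6), (1 : G)) ∨
       p = (Finsupp.single (1 : G) (-1 : ZMod 6), (1 : G)) ∨
       (p.1 = 0 ∧ p.2 ∈ S)}

/-- The lifted generating set `{(δ_{e_H}, e_H)} ∪ {(0, t) : t ∈ T}` of `Z₂^{⊕H} ⋊ H`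
(and, after quotienting by an invariant subspace `V`, of `(Z₂^{⊕H}/V) ⋊ H`). -/
def liftGens2 {H : Type*} (eH : H) (T : Set H) : Set ((H →₀ ZMod 2) × H) :=
  {p | p = (Finsupp.single eH (1 : ZMod 2), eH) ∨ (p.1 = 0 ∧ p.2 ∈ T)}

/-- The word metric of the quotient group `(Z₂^{⊕H}/V) ⋊ H` (`V` an `H`-invariant
subspace of `Z₂^{⊕H}`), expressed on representatives in `Z₂^{⊕H} × H`: the least
length of a word in `Gens` leading from `x` to some representative of the coset
of `y`. -/
def quotWordLen {H : Type*} (hmul : H → H → H) (V : Set (H →₀ ZMod 2))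
    (Gens : Set ((H →₀ ZMod 2) × H)) (x y : (H →₀ ZMod 2) × H) : ℕ :=
  sInf {ℓ : ℕ | ∃ w : List ((H →₀ ZMod 2) × H), (∀ g ∈ w, g ∈ Gens) ∧ w.length = ℓ ∧
    ∃ v ∈ V, w.foldl (wrMul hmul) x = (y.1 + v, y.2)}

/-- The word metric on `Z₆ = ZMod 6` for the generating set `{1, -1}`. -/
def z6dist (a b : ZMod 6) : ℕ := min (b - a).val (a - b).val

/-- The Hamming metric on `Z₆^I` built from the word metric on each factor. -/
def hamZ6 {I : Type*} [Fintype I] (u v : I → ZMod 6) : ℝ :=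
  ∑ x, (z6dist (u x) (v x) : ℝ)

/-- The pinned travelling salesman metric on `Z₂^{Z₆^I}` over `(Z₆^I, d_Ham)`,
pinned at `0`. -/
def TSHam {I : Type*} [Fintype I] (A B : (I → ZMod 6) → ZMod 2) : ℝ :=
  TS hamZ6 (0 : I → ZMod 6) A B

/-- Coordinatewise reduction `Z₆ → Z₂`. -/
def zbar (a : ZMod 6) : ZMod 2 := (a.val : ZMod 2)

/-- The `Z₂`-valued inner product on `Z₂^I`. -/
def ip2 {I : Type*} [Fintype I] (a b : I → ZMod 2) : ZMod 2 := ∑ x, a x * b x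

/-- The annihilator of a set `C ⊆ Z₂^I`. -/
def perp2 {I : Type*} [Fintype I] (C : Set (I → ZMod 2)) : Set (I → ZMod 2) :=
  {a | ∀ c ∈ C, ip2 a c = 0}

/-- The `Z₂`-valued inner product on `Z₂^α` for a finite type `α`. -/
def ipF {α : Type*} [Fintype α] (W V : α → ZMod 2) : ZMod 2 := ∑ w, W w * V w

/-- The linear functional `L_a : Z₆^I → Z₂`, `L_a(v) = ⟨v̄, a⟩`. -/
def La {I : Type*} [Fintype I] (a : I → ZMod 2) : (I → ZMod 6) → ZMod 2 :=
  fun v => ∑ x, zbar (v x) * a x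

/-- The subspace `D = span({1} ∪ {L_a : a ∈ C}) ≤ Z₂^{Z₆^I}`. -/
def Dspan {I : Type*} [Fintype I] (C : Set (I → ZMod 2)) :
    Submodule (ZMod 2) ((I → ZMod 6) → ZMod 2) :=
  Submodule.span (ZMod 2) ({fun _ => (1 : ZMod 2)} ∪ (La '' C))

/-- The annihilator `D^⊥` of `D = span({1} ∪ {L_a : a ∈ C})` inside `Z₂^{Z₆^I}`. -/
def DperpSet {I : Type*} [Fintype I] (C : Set (I → ZMod 2)) :
    Set ((I → ZMod 6) → ZMod 2) :=
  {W | ∀ D' ∈ Dspan C, ipF W D' = 0}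

/-- The set `B = {e_x : x ∈ I}` of standard basis vectors in `Z₆^I`. -/
def Bset {I : Type*} [Fintype I] : Set (I → ZMod 6) :=
  Set.range (fun x : I => Pi.single x (1 : ZMod 6))

/-- The embedding `ξ : Z₂^I → Z₂^{Z₆^I}`: `ξ(a)` is supported on `B` with
`ξ(a)(e_x) = a_x`. -/
def xi {I : Type*} [Fintype I] (a : I → ZMod 2) : (I → ZMod 6) → ZMod 2 :=
  fun w => ∑ x : I, if w = (Pi.single x (1 : ZMod 6) : I → ZMod 6) then a x else 0

/-- The map `R : Z₂^{Z₆^I} → Z₂^{Z₆^I}`: `R(W)` is supported on `B` with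
`R(W)(e_x) = Σ_w W(w)·⟨ē_x, w̄⟩`. -/
def Rmap {I : Type*} [Fintype I] (W : (I → ZMod 6) → ZMod 2) :
    (I → ZMod 6) → ZMod 2 :=
  fun w => ∑ x : I, if w = (Pi.single x (1 : ZMod 6) : I → ZMod 6) then (∑ v : I → ZMod 6, W v * zbar (v x)) else 0

/-- The indicator function `𝒜 : Z₆ → Z₂` of `{0, 1, 3, 4} ⊆ Z₆`. -/
def Acal : ZMod 6 → ZMod 2 := fun v => if v = 0 ∨ v = 1 ∨ v = 3 ∨ v = 4 then 1 else 0


/-- The map `Q_n` of the paper: given the excluded region `E` (which should equal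
`I₁ ∪ ⋯ ∪ Iₙ ∪ {y₁, …, yₙ}`), the set `Iₙ = In`, the point `yₙ = yn`,
a vector `u ∈ Z₆^{⊕(X∖E)}`, a function `W ∈ Z₂^{Z₆^{Iₙ}}` and `u' ∈ Z₆`,
`Qmap E In yn u W u'` is the element of `Z₂^{Z₆^{⊕X}}` given by
`w ↦ [w|_{X∖E} = u|_{X∖E}] ⬝ W(w|_{Iₙ}) ⬝ 𝒜(w_{yₙ} - u')`. -/
def Qmap {X : Type*} (E : Set X) (In : Finset X) (yn : X)
    (u : X →₀ ZMod 6) (W : ({x // x ∈ In} → ZMod 6) → ZMod 2) (u' : ZMod 6) :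
    (X →₀ ZMod 6) → ZMod 2 :=
  fun w => (if ∀ x ∉ E, w x = u x then 1 else 0) *
    W (fun x => w x.1) * Acal (w yn - u')

/-- The finite set `Eₙ = I₁ ∪ ⋯ ∪ Iₙ ∪ {y₁, …, yₙ}` (with indexing starting at `0`). -/
def EFin {G : Type*} (I : ℕ → Finset G) (y : ℕ → G) (n : ℕ) : Finset G :=
  ((Finset.range (n + 1)).biUnion I) ∪ (Finset.range (n + 1)).image y

/-- The function `Q̃ₙ(0, W, 0) ∈ Z₂^{⊕(Z₆ ≀ G)}`, realized as a finitely supported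
function: it is supported on pairs `(w, e_G)` with `w` supported inside `E`, and its
value there is `W(w|_{Iₙ}) ⬝ 𝒜(w_{yₙ})`.  (Here `E` should contain `Iₙ` and `yₙ`;
it will be `EFin I y n`.) -/
def QF {G : Type*} [Group G] (E : Finset G) (In : Finset G) (yn : G)
    (W : ({x // x ∈ In} → ZMod 6) → ZMod 2) : (((G →₀ ZMod 6) × G) →₀ ZMod 2) :=
  ∑ f : ({x // x ∈ E} → ZMod 6),
    Finsupp.single ((∑ x ∈ E.attach, Finsupp.single (x : G) (f x), (1 : G)))
      (W (fun x => if h : (x : G) ∈ E then f ⟨x, h⟩ else 0) *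
        Acal (if h : yn ∈ E then f ⟨yn, h⟩ else 0))

/-- Given a translation-invariant subspace `U ≤ Z₂^{⊕((Z₆ ≀ G)₀)}` (the zero section
being identified with `Z₆^{⊕G}`), the subspace
`V := {𝒱 ∈ Z₂^{⊕(Z₆ ≀ G)} : ∀ g₁, ((w_g)_g ↦ 𝒱((w_{g g₁⁻¹})_g, g₁)) ∈ U}`. -/
def Vext {G : Type*} [Group G] (U : Set ((G →₀ ZMod 6) →₀ ZMod 2)) :
    Set (((G →₀ ZMod 6) × G) →₀ ZMod 2) :=
  {V : ((G →₀ ZMod 6) × G) →₀ ZMod 2 | ∀ g₁ : G, ∃ u ∈ U,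
    ∀ w : G →₀ ZMod 6, u w = V (Finsupp.mapDomain (· * g₁) w, g₁)}

/-- Extension by zero of a function on the zero section `(Z₆ ≀ G)₀ ≅ Z₆^{⊕G}`
to all of `Z₆ ≀ G`. -/
def extZero {G : Type*} [Group G] (A : (G →₀ ZMod 6) →₀ ZMod 2) :
    ((G →₀ ZMod 6) × G) →₀ ZMod 2 :=
  Finsupp.mapDomain (fun w => (w, (1 : G))) A

end


private lemma z6dist_self' : ∀ a : ZMod 6, z6dist a a = 0 := by decide

private lemma z6dist_tri : ∀ a b c : ZMod 6, z6dist a c ≤ z6dist a b + z6dist b c := by decide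

private lemma z6dist_comm' : ∀ a b : ZMod 6, z6dist a b = z6dist b a := by decide

private lemma z6_chain (c : ℕ → ZMod 6) : ∀ m n : ℕ, m ≤ n →
    z6dist (c m) (c n) ≤ ∑ i ∈ Finset.Ico m n, z6dist (c i) (c (i+1)) := by
  intro m n h
  induction n, h using Nat.le_induction with
  | base => simp [z6dist_self']
  | succ n hmn ih =>
      rw [Finset.sum_Ico_succ_top hmn]
      calc z6dist (c m) (c (n+1)) ≤ z6dist (c m) (c n) + z6dist (c n) (c (n+1)) :=
            z6dist_tri _ _ _
        _ ≤ _ := Nat.add_le_add_right ih _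

private lemma ham_zero_e {I : Type*} [Fintype I] (x : I) :
    hamZ6 (0 : I → ZMod 6) (Pi.single x (1 : ZMod 6)) = 1 := by
  classical
  unfold hamZ6
  rw [Finset.sum_eq_single_of_mem x (Finset.mem_univ x)]
  · norm_num [Pi.single_eq_same]
    decide
  · intro b _ hb
    rw [Pi.single_eq_of_ne hb]
    norm_num
    decide

private lemma hamZ6_comm {I : Type*} [Fintype I] (u v : I → ZMod 6) :
    hamZ6 u v = hamZ6 v u := by
  unfold hamZ6
  exact Finset.sum_congr rfl fun x _ => by rw [z6dist_comm']

/-- If `U ∈ Z₂^{Z₆^I}` is nonzero and supported on the set `B` of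
standard basis vectors, then `TS_Ham(0, U) = 2·|spt U| + 1`. -/
theorem TSHam_of_basis_supported {I : Type*} [Fintype I] [Nonempty I]
    (U : (I → ZMod 6) → ZMod 2) (hU : U ≠ 0) (hsupp : Function.support U ⊆ Bset) :
    TSHam (0 : (I → ZMod 6) → ZMod 2) U =
      2 * (Set.ncard (Function.support U) : ℝ) + 1 := by
  classical
  set e : I → (I → ZMod 6) := fun x => Pi.single x (1 : ZMod 6) with he
  have e_inj : Function.Injective e := by
    intro a b h
    by_contra hab
    have h1 := congrFun h a
    rw [he] at h1
    simp only [Pi.single_eq_same, Pi.single_eq_of_ne hab] at h1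
    exact absurd h1 (by decide)
  set K : Finset I := Finset.univ.filter (fun x => U (e x) ≠ 0) with hK
  have memK : ∀ x, x ∈ K ↔ U (e x) ≠ 0 := by
    intro x; simp [hK]
  have spt_eq : Function.support U = e '' (K : Set I) := by
    ext p
    constructor
    · intro hp
      obtain ⟨x, hx⟩ := hsupp hp
      refine ⟨x, ?_, hx⟩
      rw [Finset.mem_coe, memK, show e x = p from hx]
      exact hp
    · rintro ⟨x, hx, rfl⟩
      exact (memK x).1 hx
  have hncard : Set.ncard (Function.support U) = K.card := by
    rw [spt_eq, Set.ncard_image_of_injective _ e_inj, Set.ncard_coe_finset]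
  have hKne : 0 < K.card := by
    rcases Function.ne_iff.1 hU with ⟨p, hp⟩
    have hp' : p ∈ Function.support U := by simpa using hp
    rw [spt_eq] at hp'
    obtain ⟨x, hx, _⟩ := hp'
    exact Finset.card_pos.2 ⟨x, hx⟩
  set k := K.card with hk
  -- the enumeration of K
  set g : Fin k → I := fun j => (K.equivFin.symm j : I) with hg
  have hgK : ∀ j, g j ∈ K := fun j => (K.equivFin.symm j).2
  have hgsurj : ∀ y ∈ K, ∃ j : Fin k, g j = y := by
    intro y hy
    exact ⟨K.equivFin ⟨y, hy⟩, by simp [hg]⟩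
  -- the tour
  set t : ℕ → (I → ZMod 6) := fun i =>
    if h : i % 2 = 1 ∧ i / 2 < k then e (g ⟨i / 2, h.2⟩) else 0 with ht
  have ht0 : t 0 = 0 := by rw [ht]; norm_num
  have htend : t (2 * k) = 0 := by
    rw [ht]; simp only []
    rw [dif_neg]; omega
  have htodd : ∀ i (h1 : i % 2 = 1) (h2 : i / 2 < k), t i = e (g ⟨i / 2, h2⟩) := by
    intro i h1 h2
    rw [ht]; simp only []
    rw [dif_pos ⟨h1, h2⟩]
  have hteven : ∀ i, i % 2 = 0 → t i = 0 := by
    intro i h1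
    rw [ht]; simp only []
    rw [dif_neg]; omega
  -- the cost set
  set S : Set ℝ := {L : ℝ | ∃ (ℓ : ℕ) (x : ℕ → (I → ZMod 6)), 1 ≤ ℓ ∧ x 0 = 0 ∧ x ℓ = 0 ∧
    (∀ p : I → ZMod 6, (0 : (I → ZMod 6) → ZMod 2) p + U p ≠ 0 → ∃ i < ℓ, x i = p) ∧
    L = ∑ i ∈ Finset.range ℓ, hamZ6 (x i) (x (i + 1))} with hS
  -- membership of 2k
  have hmem : (2 * k : ℝ) ∈ S := by
    refine ⟨2 * k, t, by omega, ht0, htend, ?_, ?_⟩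
    · intro p hp
      have hp' : U p ≠ 0 := by simpa using hp
      have : p ∈ Function.support U := hp'
      rw [spt_eq] at this
      obtain ⟨y, hy, rfl⟩ := this
      obtain ⟨j, rfl⟩ := hgsurj y hy
      refine ⟨2 * (j : ℕ) + 1, by omega, ?_⟩
      have h2 : (2 * (j : ℕ) + 1) / 2 < k := by omega
      rw [htodd _ (by omega) h2]
      have hjj : (⟨(2 * (j : ℕ) + 1) / 2, h2⟩ : Fin k) = j := by
        apply Fin.ext
        simp only [Fin.val_mk]
        omega
      rw [hjj]
    · have hterm : ∀ i ∈ Finset.range (2 * k), hamZ6 (t i) (t (i + 1)) = 1 := by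
        intro i hi
        have hi' : i < 2 * k := Finset.mem_range.1 hi
        rcases Nat.even_or_odd i with hev | hod
        · have h1 : i % 2 = 0 := Nat.even_iff.1 hev
          have h2 : (i + 1) / 2 < k := by omega
          rw [hteven i h1, htodd (i + 1) (by omega) h2, he, ham_zero_e]
        · have h1 : i % 2 = 1 := Nat.odd_iff.1 hod
          have h2 : i / 2 < k := by omega
          rw [htodd i h1 h2, hteven (i + 1) (by omega), he, hamZ6_comm, ham_zero_e]
      rw [Finset.sum_congr rfl hterm, Finset.sum_const, Finset.card_range,
        nsmul_eq_mul, mul_one]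
      push_cast
      ring
  -- lower bound
  have hlb : ∀ L ∈ S, (2 * k : ℝ) ≤ L := by
    rintro L ⟨ℓ, x, hℓ, hx0, hxℓ, hcov, rfl⟩
    have key : ∀ y ∈ K,
        (2 : ℝ) ≤ ∑ i ∈ Finset.range ℓ, (z6dist (x i y) (x (i + 1) y) : ℝ) := by
      intro y hy
      obtain ⟨j, hjℓ, hj⟩ := hcov (e y) (by simpa using (memK y).1 hy)
      set c : ℕ → ZMod 6 := fun i => x i y with hc
      have hnat : 2 ≤ ∑ i ∈ Finset.range ℓ, z6dist (c i) (c (i + 1)) := by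
        have hsplit : (∑ i ∈ Finset.Ico 0 j, z6dist (c i) (c (i + 1))) +
            ∑ i ∈ Finset.Ico j ℓ, z6dist (c i) (c (i + 1)) =
            ∑ i ∈ Finset.Ico 0 ℓ, z6dist (c i) (c (i + 1)) :=
          Finset.sum_Ico_consecutive _ (Nat.zero_le j) hjℓ.le
        have h1 : z6dist (c 0) (c j) ≤ ∑ i ∈ Finset.Ico 0 j, z6dist (c i) (c (i + 1)) :=
          z6_chain c 0 j (Nat.zero_le j)
        have h2 : z6dist (c j) (c ℓ) ≤ ∑ i ∈ Finset.Ico j ℓ, z6dist (c i) (c (i + 1)) :=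
          z6_chain c j ℓ hjℓ.le
        have hc0 : c 0 = 0 := by rw [hc]; simp [hx0]
        have hcℓ : c ℓ = 0 := by rw [hc]; simp [hxℓ]
        have hcj : c j = 1 := by
          rw [hc]; simp only []
          rw [hj, he]; exact Pi.single_eq_same y 1
        have hv1 : z6dist (c 0) (c j) = 1 := by rw [hc0, hcj]; decide
        have hv2 : z6dist (c j) (c ℓ) = 1 := by rw [hcj, hcℓ]; decide
        calc (2 : ℕ) = z6dist (c 0) (c j) + z6dist (c j) (c ℓ) := by rw [hv1, hv2]
          _ ≤ _ := by
              rw [Finset.range_eq_Ico]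
              omega
      calc (2 : ℝ) = ((2 : ℕ) : ℝ) := by norm_num
        _ ≤ ((∑ i ∈ Finset.range ℓ, z6dist (c i) (c (i + 1)) : ℕ) : ℝ) := by
            exact_mod_cast hnat
        _ = _ := by push_cast; rfl
    calc (2 * k : ℝ) = ∑ _y ∈ K, (2 : ℝ) := by
          rw [Finset.sum_const, nsmul_eq_mul]; ring
      _ ≤ ∑ y ∈ K, ∑ i ∈ Finset.range ℓ, (z6dist (x i y) (x (i + 1) y) : ℝ) :=
          Finset.sum_le_sum key
      _ ≤ ∑ y : I, ∑ i ∈ Finset.range ℓ, (z6dist (x i y) (x (i + 1) y) : ℝ) := by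
          refine Finset.sum_le_sum_of_subset_of_nonneg (Finset.subset_univ K) ?_
          intro y _ _
          exact Finset.sum_nonneg fun i _ => by positivity
      _ = ∑ i ∈ Finset.range ℓ, hamZ6 (x i) (x (i + 1)) := by
          rw [Finset.sum_comm]; rfl
  -- compute sInf
  have hInf : sInf S = (2 * k : ℝ) :=
    le_antisymm (csInf_le ⟨(2 * k : ℝ), hlb⟩ hmem) (le_csInf ⟨_, hmem⟩ hlb)
  have hne : (0 : (I → ZMod 6) → ZMod 2) ≠ U := fun h => hU h.symm
  rw [TSHam, TS, if_neg hne]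
  have : sInf {L : ℝ | ∃ (ℓ : ℕ) (x : ℕ → (I → ZMod 6)), 1 ≤ ℓ ∧ x 0 = 0 ∧ x ℓ = 0 ∧
      (∀ p : I → ZMod 6, (0 : (I → ZMod 6) → ZMod 2) p + U p ≠ 0 → ∃ i < ℓ, x i = p) ∧
      L = ∑ i ∈ Finset.range ℓ, hamZ6 (x i) (x (i + 1))} = (2 * k : ℝ) := hInf
  rw [this, hncard]
  ring
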